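/- If the probabilities p₁ ≥ p₂ ≥ … ≥ pₙ are in non-increasing (or non-decreasing) order, then the minimum average length over all binary alphabetic codes for (p₁,…,pₙ) equals the minimum average length over all binary prefix codes for the same distribution (i.e., the Huffman code length). -/

import Mathlib

/-- No codeword is a prefix of another. -/
def PrefixFree {n : ℕ} (w : Fin n → List Bool) : Prop :=
  ∀ i j : Fin n, i ≠ j → ¬ (w i <+: w j)

/-- The codewords are strictly increasing in the lexicographic order on binary strings. -/
def LexIncreasing {n : ℕ} (w : Fin n → List Bool) : Prop :=
  ∀ i j : Fin n, i < j → List.Lex (· < ·) (w i) (w j)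

/-- A binary alphabetic code: prefix-free and lexicographically increasing codewords. -/
def IsAlphabeticCode {n : ℕ} (w : Fin n → List Bool) : Prop :=
  PrefixFree w ∧ LexIncreasing w


namespace AlphaHuff

def natToBits : ℕ → ℕ → List Bool
  | 0, _ => []
  | (L+1), v => v.testBit L :: natToBits L v

@[simp] lemma natToBits_length : ∀ (L v : ℕ), (natToBits L v).length = L
  | 0, _ => rfl
  | (L+1), v => by simp [natToBits, natToBits_length L v]

lemma testBit_div_pow (v k i : ℕ) : (v / 2^k).testBit i = v.testBit (k + i) := by
  simp [Nat.testBit_eq_decide_div_mod_eq, Nat.div_div_eq_div_mul, ← pow_add]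

lemma natToBits_testBit_eq : ∀ (L a b : ℕ), natToBits L a = natToBits L b →
    ∀ k, k < L → a.testBit k = b.testBit k
  | 0, _, _, _, k, hk => absurd hk (Nat.not_lt_zero k)
  | (L+1), a, b, h, k, hk => by
      simp only [natToBits, List.cons.injEq] at h
      rcases Nat.lt_succ_iff_lt_or_eq.mp hk with h' | h'
      · exact natToBits_testBit_eq L a b h.2 k h'
      · subst h'; exact h.1

lemma natToBits_inj {L a b : ℕ} (ha : a < 2^L) (hb : b < 2^L)
    (h : natToBits L a = natToBits L b) : a = b := by
  apply Nat.eq_of_testBit_eq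
  intro i
  by_cases hi : i < L
  · exact natToBits_testBit_eq L a b h i hi
  · have hle : 2^L ≤ 2^i := Nat.pow_le_pow_right (by norm_num) (le_of_not_gt hi)
    rw [Nat.testBit_lt_two_pow (lt_of_lt_of_le ha hle),
        Nat.testBit_lt_two_pow (lt_of_lt_of_le hb hle)]

lemma natToBits_congr : ∀ (L a b : ℕ), (∀ k, k < L → a.testBit k = b.testBit k) →
    natToBits L a = natToBits L b
  | 0, _, _, _ => rfl
  | (L+1), a, b, h => by
      simp only [natToBits, List.cons.injEq]
      exact ⟨h L (Nat.lt_succ_self L), natToBits_congr L a b fun k hk => h k (hk.trans (Nat.lt_succ_self L))⟩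

lemma natToBits_mod (L v : ℕ) : natToBits L (v % 2^L) = natToBits L v := by
  apply natToBits_congr
  intro k hk
  simp [Nat.testBit_mod_two_pow, hk]

lemma natToBits_lex : ∀ (L : ℕ) {a b : ℕ}, a < b → b < 2^L →
    List.Lex (· < ·) (natToBits L a) (natToBits L b)
  | 0, a, b, hab, hb => by
      interval_cases b <;> omega
  | (L+1), a, b, hab, hb => by
      have hpos : 0 < 2^L := Nat.pow_pos (by norm_num)
      have hb2 : b / 2^L ≤ 1 := by
        have h2 : b < 2 * 2^L := by
          have : (2:ℕ)^(L+1) = 2 * 2^L := by ring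
          omega
        exact Nat.lt_succ_iff.mp ((Nat.div_lt_iff_lt_mul hpos).mpr (by linarith))
      have hdiv : a / 2^L ≤ b / 2^L := Nat.div_le_div_right hab.le
      have hta : a.testBit L = decide (a / 2^L % 2 = 1) := Nat.testBit_eq_decide_div_mod_eq
      have htb : b.testBit L = decide (b / 2^L % 2 = 1) := Nat.testBit_eq_decide_div_mod_eq
      show List.Lex (· < ·) (a.testBit L :: natToBits L a) (b.testBit L :: natToBits L b)
      rcases lt_or_eq_of_le hdiv with h | h
      · have hb1 : b / 2^L = 1 := le_antisymm hb2 (Nat.lt_of_le_of_lt (Nat.zero_le _) h)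
        have ha0 : a / 2^L = 0 := Nat.lt_one_iff.mp (hb1 ▸ h)
        rw [hta, htb, ha0, hb1]
        exact List.Lex.rel (by decide)
      · have heads : a.testBit L = b.testBit L := by rw [hta, htb, h]
        have hmod : a % 2^L < b % 2^L := by
          have h1 : 2^L * (a / 2^L) + a % 2^L = a := Nat.div_add_mod a (2^L)
          have h2 : 2^L * (b / 2^L) + b % 2^L = b := Nat.div_add_mod b (2^L)
          rw [h] at h1
          omega
        have htail : List.Lex (· < ·) (natToBits L a) (natToBits L b) := by
          rw [← natToBits_mod L a, ← natToBits_mod L b]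
          exact natToBits_lex L hmod (Nat.mod_lt _ hpos)
        rw [heads]
        exact List.Lex.cons htail

lemma natToBits_take : ∀ (L m v : ℕ), m ≤ L →
    (natToBits L v).take m = natToBits m (v / 2^(L-m))
  | L, 0, v, _ => by simp [natToBits]
  | (L+1), (m+1), v, h => by
      have hm : m ≤ L := Nat.succ_le_succ_iff.mp h
      show (v.testBit L :: natToBits L v).take (m+1) = natToBits (m+1) (v / 2^(L+1-(m+1)))
      have hsub : L + 1 - (m+1) = L - m := by omega
      rw [hsub]
      show v.testBit L :: (natToBits L v).take m =
        (v / 2^(L-m)).testBit m :: natToBits m (v / 2^(L-m))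
      rw [natToBits_take L m v hm, testBit_div_pow]
      congr 1
      rw [Nat.sub_add_cancel hm]

lemma lex_append {r : Bool → Bool → Prop} :
    ∀ {u t : List Bool}, List.Lex r u t → ∀ (s : List Bool), List.Lex r u (t ++ s) := by
  intro u t h
  induction h with
  | nil => intro s; exact List.Lex.nil
  | rel h => intro s; exact List.Lex.rel h
  | cons _ ih => intro s; exact List.Lex.cons (ih s)




lemma map_not_not (l : List Bool) : (l.map not).map not = l := by
  simp [List.map_map, Function.comp_def]

lemma map_not_prefix {u v : List Bool} (h : u.map not <+: v.map not) : u <+: v := by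
  have := h.map not
  rwa [map_not_not, map_not_not] at this

lemma lex_flip : ∀ {u v : List Bool}, List.Lex (· < ·) u v → ¬ (u <+: v) →
    List.Lex (· < ·) (v.map not) (u.map not) := by
  intro u v h
  induction h with
  | nil => intro hnp; exact absurd (List.nil_prefix) hnp
  | @rel a l₁ b l₂ hab =>
      intro _
      have ha : a = false ∧ b = true := by
        revert hab; cases a <;> cases b <;> decide
      simp only [List.map_cons, ha.1, ha.2]
      exact List.Lex.rel (by decide)
  | @cons a l₁ l₂ _ ih =>
      intro hnp
      have : ¬ (l₁ <+: l₂) := fun hpre => hnp (List.cons_prefix_cons.mpr ⟨rfl, hpre⟩)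
      simp only [List.map_cons]
      exact List.Lex.cons (ih this)

lemma kraft {n L : ℕ} (w : Fin n → List Bool) (hpf : PrefixFree w)
    (hL : ∀ i, (w i).length ≤ L) : ∑ i : Fin n, 2^(L - (w i).length) ≤ 2^L := by
  classical
  set F : Fin n → Finset (List Bool) :=
    fun i => (Finset.univ : Finset (Fin (L - (w i).length) → Bool)).image
      (fun f => w i ++ List.ofFn f) with hF
  have hcard : ∀ i, (F i).card = 2^(L - (w i).length) := by
    intro i
    rw [hF]
    rw [Finset.card_image_of_injective _
      (fun f g h => List.ofFn_injective (List.append_cancel_left h))]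
    simp
  have hmem : ∀ i l, l ∈ F i → w i <+: l ∧ l.length = L := by
    intro i l hl
    simp only [hF, Finset.mem_image, Finset.mem_univ, true_and] at hl
    obtain ⟨f, rfl⟩ := hl
    refine ⟨⟨List.ofFn f, rfl⟩, ?_⟩
    simp [Nat.add_sub_cancel' (hL i)]
  have hdisj : ∀ i ∈ (Finset.univ : Finset (Fin n)), ∀ j ∈ Finset.univ, i ≠ j →
      Disjoint (F i) (F j) := by
    intro i _ j _ hij
    rw [Finset.disjoint_left]
    intro l hli hlj
    obtain ⟨h1, _⟩ := hmem i l hli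
    obtain ⟨h2, _⟩ := hmem j l hlj
    rcases List.prefix_or_prefix_of_prefix h1 h2 with h | h
    · exact hpf i j hij h
    · exact hpf j i hij.symm h
  have hsub : (Finset.univ.biUnion F) ⊆
      (Finset.univ : Finset (Fin L → Bool)).image List.ofFn := by
    intro l hl
    simp only [Finset.mem_biUnion, Finset.mem_univ, true_and] at hl
    obtain ⟨i, hi⟩ := hl
    obtain ⟨_, hlen⟩ := hmem i l hi
    simp only [Finset.mem_image, Finset.mem_univ, true_and]
    refine ⟨fun k => l.get (Fin.cast hlen.symm k), ?_⟩
    apply List.ext_get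
    · simp [hlen]
    · intro k h1 h2
      simp [List.get_ofFn]
  calc ∑ i : Fin n, 2^(L - (w i).length) = ∑ i : Fin n, (F i).card := by
        simp only [hcard]
    _ = (Finset.univ.biUnion F).card := (Finset.card_biUnion hdisj).symm
    _ ≤ ((Finset.univ : Finset (Fin L → Bool)).image List.ofFn).card :=
        Finset.card_le_card hsub
    _ ≤ 2^L := by
        rw [Finset.card_image_of_injective _ List.ofFn_injective]
        simp



lemma canonical {n L : ℕ} (ℓ : Fin n → ℕ) (hm : Monotone ℓ) (hL : ∀ i, ℓ i ≤ L)
    (hk : ∑ i : Fin n, 2^(L - ℓ i) ≤ 2^L) :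
    ∃ w : Fin n → List Bool, (PrefixFree w ∧ LexIncreasing w) ∧ ∀ i, (w i).length = ℓ i := by
  classical
  set N : Fin n → ℕ := fun i => ∑ j ∈ Finset.Iio i, 2^(L - ℓ j) with hN
  set C : Fin n → ℕ := fun i => N i / 2^(L - ℓ i) with hC
  have hpos : ∀ m : ℕ, 0 < 2^m := fun m => Nat.pow_pos (by norm_num)
  have hNbound : ∀ i, N i + 2^(L - ℓ i) ≤ 2^L := by
    intro i
    have h1 : N i + 2^(L - ℓ i) = ∑ j ∈ insert i (Finset.Iio i), 2^(L - ℓ j) := by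
      rw [Finset.sum_insert (by simp)]; ring
    rw [h1]
    exact le_trans (Finset.sum_le_sum_of_subset (Finset.subset_univ _)) hk
  have hClt : ∀ i, C i < 2^(ℓ i) := by
    intro i
    rw [hC]
    rw [Nat.div_lt_iff_lt_mul (hpos _), ← pow_add, Nat.add_sub_cancel' (hL i)]
    have := hNbound i
    have := hpos (L - ℓ i)
    omega
  have hkey : ∀ i j : Fin n, i < j → C i < C j / 2^(ℓ j - ℓ i) := by
    intro i j h
    have hij : ℓ i ≤ ℓ j := hm h.le
    have e1 : C j / 2^(ℓ j - ℓ i) = N j / 2^(L - ℓ i) := by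
      rw [hC, Nat.div_div_eq_div_mul, ← pow_add]
      congr 2
      have := hL j
      omega
    have e2 : N i + 2^(L - ℓ i) ≤ N j := by
      have hss : insert i (Finset.Iio i) ⊆ Finset.Iio j := by
        intro k hk
        simp only [Finset.mem_insert, Finset.mem_Iio] at hk ⊢
        rcases hk with rfl | hk
        · exact h
        · exact hk.trans h
      have h1 : N i + 2^(L - ℓ i) = ∑ k ∈ insert i (Finset.Iio i), 2^(L - ℓ k) := by
        rw [Finset.sum_insert (by simp)]; ring
      rw [h1, hN]
      exact Finset.sum_le_sum_of_subset hss
    have h3 : C i + 1 ≤ N j / 2^(L - ℓ i) := by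
      have : C i + 1 = (N i + 2^(L - ℓ i)) / 2^(L - ℓ i) := by
        rw [Nat.add_div_right _ (hpos _)]
      rw [this]
      exact Nat.div_le_div_right e2
    rw [e1]
    omega
  have hsmall : ∀ i j : Fin n, i < j → C j / 2^(ℓ j - ℓ i) < 2^(ℓ i) := by
    intro i j h
    have hij : ℓ i ≤ ℓ j := hm h.le
    rw [Nat.div_lt_iff_lt_mul (hpos _), ← pow_add, Nat.add_sub_cancel' hij]
    exact hClt j
  refine ⟨fun i => natToBits (ℓ i) (C i), ⟨?_, ?_⟩, fun i => natToBits_length _ _⟩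
  · -- PrefixFree
    intro i j hij hpre
    rcases lt_or_gt_of_ne hij with h | h
    · rw [List.prefix_iff_eq_take] at hpre
      rw [natToBits_length] at hpre
      rw [natToBits_take (ℓ j) (ℓ i) (C j) (hm h.le)] at hpre
      have := natToBits_inj (hClt i) (hsmall i j h) hpre
      have := hkey i j h
      omega
    · have hlen : ℓ i ≤ ℓ j := by
        have := hpre.length_le
        simpa using this
      have hlen2 : ℓ j ≤ ℓ i := hm h.le
      have heq : ℓ j = ℓ i := le_antisymm hlen2 hlen
      have heqw' : natToBits (ℓ i) (C i) = natToBits (ℓ j) (C j) :=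
        hpre.eq_of_length (by simp [heq])
      rw [heq] at heqw'
      have hCji : C j < 2^(ℓ i) := heq ▸ hClt j
      have := natToBits_inj (hClt i) hCji heqw' 
      have h2 := hkey j i h
      rw [heq, Nat.sub_self, pow_zero, Nat.div_one] at h2
      omega
  · -- LexIncreasing
    intro i j h
    have hij : ℓ i ≤ ℓ j := hm h.le
    have htake : (natToBits (ℓ j) (C j)).take (ℓ i) =
        natToBits (ℓ i) (C j / 2^(ℓ j - ℓ i)) :=
      natToBits_take (ℓ j) (ℓ i) (C j) hij
    have hlex : List.Lex (· < ·) (natToBits (ℓ i) (C i))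
        ((natToBits (ℓ j) (C j)).take (ℓ i)) := by
      rw [htake]
      exact natToBits_lex (ℓ i) (hkey i j h) (hsmall i j h)
    have := lex_append hlex ((natToBits (ℓ j) (C j)).drop (ℓ i))
    rwa [List.take_append_drop] at this


lemma canonical_anti {n L : ℕ} (ℓ : Fin n → ℕ) (hm : Antitone ℓ) (hL : ∀ i, ℓ i ≤ L)
    (hk : ∑ i : Fin n, 2^(L - ℓ i) ≤ 2^L) :
    ∃ w : Fin n → List Bool, (PrefixFree w ∧ LexIncreasing w) ∧ ∀ i, (w i).length = ℓ i := by
  have hm' : Monotone (ℓ ∘ Fin.revPerm) := by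
    intro i j hij
    exact hm (Fin.rev_le_rev.mpr hij)
  have hk' : ∑ i : Fin n, 2^(L - (ℓ ∘ Fin.revPerm) i) ≤ 2^L := by
    have h2 : ∑ i : Fin n, 2^(L - (ℓ ∘ Fin.revPerm) i) = ∑ i : Fin n, 2^(L - ℓ i) :=
      Equiv.sum_comp Fin.revPerm (fun j => 2^(L - ℓ j))
    rw [h2]; exact hk
  obtain ⟨c, ⟨hpf, hlex⟩, hlen⟩ := canonical (ℓ ∘ Fin.revPerm) hm' (fun i => hL _) hk'
  refine ⟨fun i => (c (Fin.revPerm i)).map not, ⟨?_, ?_⟩, ?_⟩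
  · intro i j hij hpre
    have := map_not_prefix hpre
    exact hpf _ _ (fun h => hij (Fin.revPerm.injective h)) this
  · intro i j hij
    have h1 : (Fin.revPerm j : Fin n) < Fin.revPerm i := by
      simpa [Fin.revPerm] using Fin.rev_lt_rev.mpr hij
    have h2 := hlex _ _ h1
    have h3 : ¬ (c (Fin.revPerm j) <+: c (Fin.revPerm i)) :=
      hpf _ _ (ne_of_lt h1)
    exact lex_flip h2 h3
  · intro i
    have h3 := hlen (Fin.revPerm i)
    simp only [List.length_map, h3, Function.comp_apply]
    simp

end AlphaHuff

/-- For monotone (non-increasing or non-decreasing) distributions, the minimum average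
length of an alphabetic code equals the minimum average length of a prefix code. -/
theorem monotone_alphabetic_eq_huffman (n : ℕ) (hn : 0 < n) (p : Fin n → ℝ)
    (hp : ∀ i, 0 < p i) (hsum : ∑ i, p i = 1) (hmon : Antitone p ∨ Monotone p) :
    sInf {x : ℝ | ∃ w : Fin n → List Bool, IsAlphabeticCode w ∧
        x = ∑ i, p i * ((w i).length : ℝ)} =
      sInf {x : ℝ | ∃ w : Fin n → List Bool, PrefixFree w ∧
        x = ∑ i, p i * ((w i).length : ℝ)} := by
  classical
  set A := {x : ℝ | ∃ w : Fin n → List Bool, IsAlphabeticCode w ∧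
      x = ∑ i, p i * ((w i).length : ℝ)} with hA
  set B := {x : ℝ | ∃ w : Fin n → List Bool, PrefixFree w ∧
      x = ∑ i, p i * ((w i).length : ℝ)} with hB
  -- A is nonempty
  have hAne : A.Nonempty := by
    obtain ⟨w, hw, hwl⟩ := AlphaHuff.canonical (fun _ : Fin n => n) monotone_const
      (fun _ => le_refl n) (by simpa using (Nat.lt_two_pow_self (n := n)).le)
    exact ⟨∑ i, p i * ((w i).length : ℝ), w, ⟨hw.1, hw.2⟩, rfl⟩
  have hAB : A ⊆ B := by
    rintro x ⟨w, hw, rfl⟩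
    exact ⟨w, hw.1, rfl⟩
  have hBne : B.Nonempty := hAne.mono hAB
  have hAbdd : BddBelow A := by
    refine ⟨0, ?_⟩
    rintro x ⟨w, _, rfl⟩
    exact Finset.sum_nonneg fun i _ => mul_nonneg (hp i).le (Nat.cast_nonneg _)
  have hBbdd : BddBelow B := by
    refine ⟨0, ?_⟩
    rintro x ⟨w, _, rfl⟩
    exact Finset.sum_nonneg fun i _ => mul_nonneg (hp i).le (Nat.cast_nonneg _)
  -- for any x in B there is y in A with y ≤ x
  have hmain : ∀ x ∈ B, ∃ y ∈ A, y ≤ x := by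
    rintro x ⟨w, hpf, rfl⟩
    set ℓ : Fin n → ℕ := fun i => (w i).length with hℓ
    set L : ℕ := Finset.univ.sup ℓ with hLdef
    have hL : ∀ i, ℓ i ≤ L := fun i => Finset.le_sup (Finset.mem_univ i)
    have hk : ∑ i : Fin n, 2^(L - ℓ i) ≤ 2^L := AlphaHuff.kraft w hpf hL
    -- get a permutation τ with code existence and antivariance
    have key : ∃ τ : Equiv.Perm (Fin n),
        (∃ c : Fin n → List Bool, (PrefixFree c ∧ LexIncreasing c) ∧
          ∀ i, (c i).length = ℓ (τ i)) ∧
        Antivary p (fun i => ((ℓ (τ i) : ℝ))) := by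
      rcases hmon with hanti | hmono
      · refine ⟨Tuple.sort ℓ, ?_, ?_⟩
        · refine AlphaHuff.canonical (ℓ ∘ Tuple.sort ℓ) (Tuple.monotone_sort ℓ)
            (fun i => hL _) ?_
          have h2 : ∑ i : Fin n, 2^(L - (ℓ ∘ Tuple.sort ℓ) i) = ∑ i : Fin n, 2^(L - ℓ i) :=
            Equiv.sum_comp (Tuple.sort ℓ) (fun j => 2^(L - ℓ j))
          rw [h2]; exact hk
        · intro i j hlt
          have hij : i < j := by
            by_contra hle
            push_neg at hle
            have h4 : ((ℓ (Tuple.sort ℓ j) : ℝ)) ≤ (ℓ (Tuple.sort ℓ i) : ℝ) :=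
              Nat.cast_le.mpr (Tuple.monotone_sort ℓ hle)
            exact absurd hlt (not_lt.mpr h4)
          exact hanti hij.le
      · refine ⟨Fin.revPerm.trans (Tuple.sort ℓ), ?_, ?_⟩
        · have hanti2 : Antitone (ℓ ∘ (Fin.revPerm.trans (Tuple.sort ℓ))) := by
            intro i j hij
            exact Tuple.monotone_sort ℓ (Fin.rev_le_rev.mpr hij)
          refine AlphaHuff.canonical_anti (ℓ ∘ (Fin.revPerm.trans (Tuple.sort ℓ))) hanti2
            (fun i => hL _) ?_
          have h2 : ∑ i : Fin n, 2^(L - (ℓ ∘ (Fin.revPerm.trans (Tuple.sort ℓ))) i) = ∑ i : Fin n, 2^(L - ℓ i) :=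
            Equiv.sum_comp (Fin.revPerm.trans (Tuple.sort ℓ)) (fun j => 2^(L - ℓ j))
          rw [h2]; exact hk
        · intro i j hlt
          have hij : j < i := by
            by_contra hle
            push_neg at hle
            have h4 : ((ℓ ((Fin.revPerm.trans (Tuple.sort ℓ)) j) : ℝ)) ≤
                (ℓ ((Fin.revPerm.trans (Tuple.sort ℓ)) i) : ℝ) :=
              Nat.cast_le.mpr (Tuple.monotone_sort ℓ (Fin.rev_le_rev.mpr hle))
            exact absurd hlt (not_lt.mpr h4)
          exact hmono hij.le
    obtain ⟨τ, ⟨c, hc, hclen⟩, hav⟩ := key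
    refine ⟨∑ i, p i * ((ℓ (τ i) : ℝ)), ⟨c, ⟨hc.1, hc.2⟩, by simp [hclen]⟩, ?_⟩
    have := hav.sum_smul_le_sum_smul_comp_perm (σ := τ⁻¹)
    simpa [smul_eq_mul, Equiv.apply_symm_apply] using this
  refine le_antisymm ?_ ?_
  · apply le_csInf hBne
    intro x hx
    obtain ⟨y, hyA, hyx⟩ := hmain x hx
    exact le_trans (csInf_le hAbdd hyA) hyx
  · exact csInf_le_csInf hBbdd hAne hAB
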